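/- arXiv:2512.10274 — 3 statements merged into one kernel-verified Lean document; each statement's English description precedes it below -/
import Mathlib

section
/- Let D be a finite set, let I be a down-closed family of subsets of D (i.e., if S ∈ I and T ⊆ S then T ∈ I), and let S₀ ∈ I. For T ∈ I define the coefficient c_T = Σ_{S ∈ I, T ⊆ S} (-1)^{|S \ T|}. Then for every subset U ⊆ S₀ one has Σ_{T ∈ I, T ∩ S₀ = U} c_T = 1 if U = S₀, and = 0 otherwise. -/
open Finset

private lemma inner_sum_aux {α : Type*} [DecidableEq α] (S₀ U S : Finset α) (hU : U ⊆ S₀) :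
    ∑ T ∈ S.powerset.filter (fun T => T ∩ S₀ = U), (-1 : ℤ) ^ (S \ T).card
      = if U ⊆ S ∧ S ⊆ S₀ then (-1 : ℤ) ^ (S \ U).card else 0 := by
  by_cases hUS : U ⊆ S
  · have h1 : ∑ T ∈ S.powerset.filter (fun T => T ∩ S₀ = U), (-1 : ℤ) ^ (S \ T).card
        = ∑ X ∈ (S \ S₀).powerset, (-1 : ℤ) ^ (S \ U).card * (-1 : ℤ) ^ X.card := by
      refine Finset.sum_nbij' (fun T => T \ S₀) (fun X => U ∪ X) ?_ ?_ ?_ ?_ ?_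
      · intro T hT
        simp only [mem_filter, mem_powerset] at hT ⊢
        exact sdiff_subset_sdiff hT.1 le_rfl
      · intro X hX
        simp only [mem_powerset] at hX
        simp only [mem_filter, mem_powerset]
        constructor
        · exact union_subset hUS (hX.trans sdiff_subset)
        · ext a
          have h1 := @hX a
          have h2 := @hU a
          simp only [mem_union, mem_inter, mem_sdiff] at *
          tauto
      · intro T hT
        simp only [mem_filter, mem_powerset] at hT
        ext a
        have h1 := @hT.2 ▸ (rfl : T ∩ S₀ = T ∩ S₀)
        have h2 : a ∈ T ∩ S₀ ↔ a ∈ U := by rw [hT.2]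
        simp only [mem_union, mem_inter, mem_sdiff] at *
        tauto
      · intro X hX
        simp only [mem_powerset] at hX
        ext a
        have h1 := @hX a
        have h2 := @hU a
        simp only [mem_union, mem_sdiff] at *
        tauto
      · intro T hT
        simp only [mem_filter, mem_powerset] at hT
        have hUT : U ⊆ T := by
          intro a ha; rw [← hT.2] at ha; exact (mem_inter.1 ha).1
        have hTU : (T \ U) = (T \ S₀) := by
          ext a
          have h2 : a ∈ T ∩ S₀ ↔ a ∈ U := by rw [hT.2]
          simp only [mem_inter, mem_sdiff] at *
          tauto
        have hc2 : (S \ U).card = (S \ T).card + (T \ S₀).card := by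
          rw [← hTU, ← card_union_of_disjoint (sdiff_disjoint.mono_right sdiff_subset),
            sdiff_union_sdiff_cancel hT.1 hUT]
        rw [hc2, pow_add, mul_assoc, ← pow_add,
          Even.neg_one_pow ⟨(T \ S₀).card, rfl⟩, mul_one]
    rw [h1, ← mul_sum, sum_powerset_neg_one_pow_card]
    by_cases hSS : S ⊆ S₀
    · rw [if_pos (sdiff_eq_empty_iff_subset.2 hSS), if_pos ⟨hUS, hSS⟩, mul_one]
    · rw [if_neg (fun h => hSS (sdiff_eq_empty_iff_subset.1 h)), if_neg (fun h => hSS h.2),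
        mul_zero]
  · rw [if_neg (fun h => hUS h.1)]
    apply Finset.sum_eq_zero
    intro T hT
    simp only [mem_filter, mem_powerset] at hT
    have : U ⊆ S := by
      rw [← hT.2]; exact inter_subset_left.trans hT.1
    exact absurd this hUS

/-- Inclusion–exclusion identity for a down-closed family `I` of subsets of a finite
set: for `S₀ ∈ I` and `U ⊆ S₀`, the sum of the coefficients
`c_T = Σ_{S ∈ I, T ⊆ S} (-1)^{|S \ T|}` over all `T ∈ I` with `T ∩ S₀ = U`
equals `1` if `U = S₀` and `0` otherwise. -/
theorem statement0 {α : Type*} [Fintype α] [DecidableEq α]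
    (I : Finset (Finset α))
    (hI : ∀ S ∈ I, ∀ T ⊆ S, T ∈ I)
    (S₀ : Finset α) (hS₀ : S₀ ∈ I)
    (U : Finset α) (hU : U ⊆ S₀) :
    ∑ T ∈ I.filter (fun T => T ∩ S₀ = U),
        (∑ S ∈ I.filter (fun S => T ⊆ S), (-1 : ℤ) ^ (S \ T).card)
      = if U = S₀ then 1 else 0 := by
  classical
  have swap : ∑ T ∈ I.filter (fun T => T ∩ S₀ = U),
        (∑ S ∈ I.filter (fun S => T ⊆ S), (-1 : ℤ) ^ (S \ T).card)
      = ∑ S ∈ I, ∑ T ∈ S.powerset.filter (fun T => T ∩ S₀ = U), (-1 : ℤ) ^ (S \ T).card := by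
    rw [Finset.sum_comm' (t' := I) (s' := fun S => S.powerset.filter (fun T => T ∩ S₀ = U))]
    intro T S
    simp only [mem_filter, mem_powerset]
    constructor
    · rintro ⟨⟨hTI, hTU⟩, hSI, hTS⟩; exact ⟨⟨hTS, hTU⟩, hSI⟩
    · rintro ⟨⟨hTS, hTU⟩, hSI⟩; exact ⟨⟨hI S hSI T hTS, hTU⟩, hSI, hTS⟩
  rw [swap]
  have h2 : ∑ S ∈ I, ∑ T ∈ S.powerset.filter (fun T => T ∩ S₀ = U), (-1 : ℤ) ^ (S \ T).card
      = ∑ S ∈ I.filter (fun S => U ⊆ S ∧ S ⊆ S₀), (-1 : ℤ) ^ (S \ U).card := by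
    rw [sum_filter]
    exact Finset.sum_congr rfl fun S _ => inner_sum_aux S₀ U S hU
  rw [h2]
  have h3 : I.filter (fun S => U ⊆ S ∧ S ⊆ S₀) = S₀.powerset.filter (fun S => U ⊆ S) := by
    ext S
    simp only [mem_filter, mem_powerset]
    exact ⟨fun ⟨_, h1, h2⟩ => ⟨h2, h1⟩, fun ⟨h2, h1⟩ => ⟨hI S₀ hS₀ S h2, h1, h2⟩⟩
  rw [h3]
  have h4 : ∑ S ∈ S₀.powerset.filter (fun S => U ⊆ S), (-1 : ℤ) ^ (S \ U).card
      = ∑ X ∈ (S₀ \ U).powerset, (-1 : ℤ) ^ X.card := by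
    refine Finset.sum_nbij' (fun S => S \ U) (fun X => U ∪ X) ?_ ?_ ?_ ?_ ?_
    · intro S hS
      simp only [mem_filter, mem_powerset] at hS ⊢
      exact sdiff_subset_sdiff hS.1 le_rfl
    · intro X hX
      simp only [mem_powerset] at hX
      simp only [mem_filter, mem_powerset]
      exact ⟨union_subset hU (hX.trans sdiff_subset), subset_union_left⟩
    · intro S hS
      simp only [mem_filter, mem_powerset] at hS
      exact union_sdiff_of_subset hS.2
    · intro X hX
      simp only [mem_powerset] at hX
      exact union_sdiff_cancel_left (Disjoint.mono_right hX disjoint_sdiff)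
    · intro S _; rfl
  rw [h4, sum_powerset_neg_one_pow_card]
  congr 1
  simp only [sdiff_eq_empty_iff_subset, eq_iff_iff]
  exact ⟨fun h => subset_antisymm hU h, fun h => h ▸ le_rfl⟩
end

section
/- Let f : A → B and g : B → C be continuous maps of topological spaces with f surjective. If f is a Serre fibration and g ∘ f is a Serre fibration, then g is a Serre fibration. -/
/-- A continuous map is a *Serre fibration* if it has the homotopy lifting
property with respect to the closed disks `D^q` for all `q ≥ 0`. -/
def IsSerreFibration {A B : Type*} [TopologicalSpace A] [TopologicalSpace B]
    (f : A → B) : Prop :=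
  Continuous f ∧
  ∀ (n : ℕ)
    (h₀ : C((Metric.closedBall (0 : EuclideanSpace ℝ (Fin n)) 1), A))
    (H : C((Metric.closedBall (0 : EuclideanSpace ℝ (Fin n)) 1) × unitInterval, B)),
    (∀ x, H (x, 0) = f (h₀ x)) →
    ∃ H' : C((Metric.closedBall (0 : EuclideanSpace ℝ (Fin n)) 1) × unitInterval, A),
      (∀ x, H' (x, 0) = h₀ x) ∧ ∀ z, f (H' z) = H z

/-- If `f : A → B` is a surjective Serre fibration and `g ∘ f` is a Serre
fibration, then `g : B → C` is a Serre fibration. -/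
theorem statement6 {A B C' : Type*}
    [TopologicalSpace A] [TopologicalSpace B] [TopologicalSpace C']
    (f : A → B) (g : B → C')
    (hg_cont : Continuous g)
    (hf_surj : Function.Surjective f)
    (hf : IsSerreFibration f)
    (hgf : IsSerreFibration (g ∘ f)) :
    IsSerreFibration g := by
  obtain ⟨hf_cont, hf_lift⟩ := hf
  obtain ⟨_, hgf_lift⟩ := hgf
  refine ⟨hg_cont, fun n h₀ H hH0 => ?_⟩
  have hc : ∀ (x : Metric.closedBall (0 : EuclideanSpace ℝ (Fin n)) 1) (t : unitInterval),
      (t : ℝ) • (x : EuclideanSpace ℝ (Fin n)) ∈ Metric.closedBall (0 : EuclideanSpace ℝ (Fin n)) 1 := by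
    intro x t
    rw [Metric.mem_closedBall, dist_zero_right, norm_smul]
    have hx : ‖(x : EuclideanSpace ℝ (Fin n))‖ ≤ 1 := by
      simpa [dist_zero_right] using (Metric.mem_closedBall.mp x.2)
    have ht : ‖(t : ℝ)‖ ≤ 1 := by
      rw [Real.norm_eq_abs, abs_of_nonneg t.2.1]; exact t.2.2
    calc ‖(t : ℝ)‖ * ‖(x : EuclideanSpace ℝ (Fin n))‖ ≤ 1 * 1 :=
          mul_le_mul ht hx (norm_nonneg _) zero_le_one
      _ = 1 := one_mul 1
  let c : C(Metric.closedBall (0 : EuclideanSpace ℝ (Fin n)) 1 × unitInterval, Metric.closedBall (0 : EuclideanSpace ℝ (Fin n)) 1) :=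
    ⟨fun p => ⟨(p.2 : ℝ) • (p.1 : EuclideanSpace ℝ (Fin n)), hc p.1 p.2⟩, by
      apply Continuous.subtype_mk
      exact ((continuous_subtype_val.comp continuous_snd).smul
        (continuous_subtype_val.comp continuous_fst))⟩
  have h0D : (0 : EuclideanSpace ℝ (Fin n)) ∈ Metric.closedBall (0 : EuclideanSpace ℝ (Fin n)) 1 := Metric.mem_closedBall_self zero_le_one
  obtain ⟨a₀, ha₀⟩ := hf_surj (h₀ ⟨0, h0D⟩)
  -- lift the contraction homotopy through f
  have hKinit : ∀ x, (h₀.comp c) (x, 0) = f ((ContinuousMap.const _ a₀) x) := by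
    intro x
    have : c (x, 0) = ⟨0, h0D⟩ := Subtype.ext (by simp [c])
    simp only [ContinuousMap.comp_apply, this, ha₀, ContinuousMap.const_apply]
  obtain ⟨K', hK'0, hK'f⟩ := hf_lift n (ContinuousMap.const _ a₀) (h₀.comp c) hKinit
  -- the lift of h₀ through f
  let hlift : C(Metric.closedBall (0 : EuclideanSpace ℝ (Fin n)) 1, A) := K'.comp ⟨fun x => (x, 1), continuous_id.prodMk continuous_const⟩
  have hhlift : ∀ x, f (hlift x) = h₀ x := by
    intro x
    have := hK'f (x, 1)
    have hc1 : c (x, 1) = x := Subtype.ext (by simp [c])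
    simpa [hlift, hc1] using this
  -- apply the HLP of g ∘ f
  have hHinit : ∀ x, H (x, 0) = (g ∘ f) (hlift x) := by
    intro x
    rw [hH0 x, Function.comp_apply, hhlift x]
  obtain ⟨H', hH'0, hH'gf⟩ := hgf_lift n hlift H hHinit
  refine ⟨⟨fun z => f (H' z), hf_cont.comp H'.continuous⟩, fun x => ?_, fun z => ?_⟩
  · simp only [ContinuousMap.coe_mk, hH'0 x, hhlift x]
  · exact hH'gf z
end

section
/- For every p ≥ 1 and 0 ≤ i ≤ p, the topological horn |Λ^p_i| (the union of all faces of the standard topological simplex Δ^p except the i-th face) is a retract of Δ^p: there is a continuous map r : Δ^p → |Λ^p_i| whose restriction to |Λ^p_i| is the identity. Consequently, for any topological space Z, the restriction map C(Δ^p, Z) → C(|Λ^p_i|, Z) on sets of continuous maps is surjective. -/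
/-- The standard topological `n`-simplex. -/
def topStdSimplex (n : ℕ) : Set (Fin (n + 1) → ℝ) :=
  {t | (∀ i, 0 ≤ t i) ∧ ∑ i, t i = 1}

/-- The topological horn `|Λ^p_i|`: the union of all faces of `Δ^p` other than
the `i`-th face, i.e. the points of `Δ^p` with some coordinate `t j = 0` for
`j ≠ i`. -/
def topHorn (p : ℕ) (i : Fin (p + 1)) : Set (Fin (p + 1) → ℝ) :=
  {t | t ∈ topStdSimplex p ∧ ∃ j, j ≠ i ∧ t j = 0}

/-!
Let `m(x)` be the smallest barycentric coordinate of `x` other than the `i`-th. Moving `x`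
by `m(x)` along the direction `d = p • eᵢ - ∑_{j ≠ i} eⱼ`, whose coordinates sum to zero, keeps
`x` in the hyperplane `∑ t = 1`, keeps every coordinate nonnegative, and makes the minimising
coordinate vanish, so it lands in the horn; on the horn `m = 0`, so nothing moves. Any map on
the horn then extends to the simplex by precomposing with this retraction.
-/

theorem ContinuousMap.exists_extension_of_leftInverse {X Y Z : Type*} [TopologicalSpace X]
    [TopologicalSpace Y] [TopologicalSpace Z] (r : C(X, Y)) {ι : Y → X}
    (hr : Function.LeftInverse r ι) (f : C(Y, Z)) :
    ∃ F : C(X, Z), ∀ y, F (ι y) = f y :=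
  ⟨f.comp r, fun y => by rw [comp_apply, hr y]⟩

namespace topHorn

lemma nonempty_erase {p : ℕ} (hp : 1 ≤ p) (i : Fin (p + 1)) : (Finset.univ.erase i).Nonempty :=
  Finset.univ_nontrivial_iff.2 (Fin.nontrivial_iff_two_le.2 (by omega)) |>.erase_nonempty

variable {p : ℕ} (hp : 1 ≤ p) (i : Fin (p + 1))

noncomputable def minCoord (x : Fin (p + 1) → ℝ) : ℝ :=
  (Finset.univ.erase i).inf' (nonempty_erase hp i) x

lemma minCoord_le (x : Fin (p + 1) → ℝ) {j : Fin (p + 1)} (hj : j ≠ i) :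
    minCoord hp i x ≤ x j :=
  Finset.inf'_le _ (Finset.mem_erase.2 ⟨hj, Finset.mem_univ j⟩)

lemma exists_eq_minCoord (x : Fin (p + 1) → ℝ) : ∃ j ≠ i, x j = minCoord hp i x := by
  obtain ⟨j, hj, hmin⟩ := Finset.exists_mem_eq_inf' (nonempty_erase hp i) x
  exact ⟨j, Finset.ne_of_mem_erase hj, hmin.symm⟩

lemma minCoord_nonneg {x : Fin (p + 1) → ℝ} (hx : x ∈ topStdSimplex p) :
    0 ≤ minCoord hp i x :=
  Finset.le_inf' _ _ fun j _ => hx.1 j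

lemma minCoord_eq_zero {x : Fin (p + 1) → ℝ} (hx : x ∈ topHorn p i) : minCoord hp i x = 0 := by
  obtain ⟨hxΔ, j, hji, hj⟩ := hx
  exact le_antisymm (hj ▸ minCoord_le hp i x hji) (minCoord_nonneg hp i hxΔ)

lemma continuous_minCoord : Continuous (minCoord hp i) :=
  Continuous.finset_inf'_apply _ fun j _ => continuous_apply j

def retractDir (j : Fin (p + 1)) : ℝ := if j = i then p else -1

lemma sum_retractDir : ∑ j, retractDir i j = 0 := by
  simp [Fin.sum_univ_succAbove _ i, retractDir, Fin.succAbove_ne]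

noncomputable def retraction (x : Fin (p + 1) → ℝ) : Fin (p + 1) → ℝ :=
  x + minCoord hp i x • retractDir i

lemma retraction_mem {x : Fin (p + 1) → ℝ} (hx : x ∈ topStdSimplex p) :
    retraction hp i x ∈ topHorn p i := by
  have hm := minCoord_nonneg hp i hx
  refine ⟨⟨fun j => ?_, ?_⟩, ?_⟩
  · by_cases hj : j = i
    · simp only [retraction, Pi.add_apply, Pi.smul_apply, smul_eq_mul, retractDir, if_pos hj]
      have := hx.1 j
      positivity
    · simp only [retraction, Pi.add_apply, Pi.smul_apply, smul_eq_mul, retractDir, if_neg hj]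
      linarith [minCoord_le hp i x hj]
  · simp [retraction, Finset.sum_add_distrib, ← Finset.mul_sum, sum_retractDir, hx.2]
  · obtain ⟨j, hji, hj⟩ := exists_eq_minCoord hp i x
    refine ⟨j, hji, ?_⟩
    simp [retraction, retractDir, hji, hj]

lemma retraction_eq_self {x : Fin (p + 1) → ℝ} (hx : x ∈ topHorn p i) :
    retraction hp i x = x := by
  simp [retraction, minCoord_eq_zero hp i hx]

lemma continuous_retraction : Continuous (retraction hp i) :=
  continuous_id.add ((continuous_minCoord hp i).smul continuous_const)

noncomputable def retractionMap : C(topStdSimplex p, topHorn p i) where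
  toFun x := ⟨retraction hp i x, retraction_mem hp i x.2⟩
  continuous_toFun := ((continuous_retraction hp i).comp continuous_subtype_val).subtype_mk _

lemma retractionMap_leftInverse :
    Function.LeftInverse (retractionMap hp i) fun x : topHorn p i => ⟨x.1, x.2.1⟩ :=
  fun x => Subtype.ext (retraction_eq_self hp i x.2)

end topHorn

/-- For `p ≥ 1` and `0 ≤ i ≤ p`, the topological horn `|Λ^p_i|` is a retract of
`Δ^p`; consequently, for any topological space `Z`, restriction of continuous
maps `C(Δ^p, Z) → C(|Λ^p_i|, Z)` is surjective. -/
theorem statement11 {p : ℕ} (hp : 1 ≤ p) (i : Fin (p + 1)) :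
    (∃ r : topStdSimplex p → topHorn p i,
        Continuous r ∧ ∀ x : topHorn p i, r ⟨x.1, x.2.1⟩ = x)
    ∧ ∀ (Z : Type) [TopologicalSpace Z] (f : C(topHorn p i, Z)),
        ∃ F : C(topStdSimplex p, Z), ∀ x : topHorn p i, F ⟨x.1, x.2.1⟩ = f x :=
  ⟨⟨topHorn.retractionMap hp i, (topHorn.retractionMap hp i).continuous,
      topHorn.retractionMap_leftInverse hp i⟩,
    fun _ _ f => (topHorn.retractionMap hp i).exists_extension_of_leftInverse
      (topHorn.retractionMap_leftInverse hp i) f⟩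
end
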